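/- Let ρ > 0 and let H ∈ ℂ^{N×M} have columns h_1,…,h_M; for j ∈ {1,…,M} let H_j ∈ ℂ^{N×(M−1)} be H with its j-th column removed and Q_j = (ρ I_N + H_j H_j^H)^{-1}. Then the (j,j) entry of (ρ I_M + H^H H)^{-1} equals 1/(ρ (1 + h_j^H Q_j h_j)). -/

import Mathlib

/-!
The push-through identity `Hᴴ (ρ + H Hᴴ)⁻¹ = (ρ + Hᴴ H)⁻¹ Hᴴ` gives
`ρ (ρ + Hᴴ H)⁻¹ = I - Hᴴ Q H` with `Q = (ρ + H Hᴴ)⁻¹`, so `ρ Q̃_jj = 1 - h_jᴴ Q h_j`.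
Since `Q⁻¹ = Q_j⁻¹ + h_j h_jᴴ`, the Sherman–Morrison formula gives
`h_jᴴ Q h_j = q / (1 + q)` with `q = h_jᴴ Q_j h_j`, hence `ρ Q̃_jj = 1 / (1 + q)`.
-/

noncomputable section

open MeasureTheory ProbabilityTheory Matrix Filter Finset
open scoped ENNReal NNReal Matrix BoundedContinuousFunction Topology ComplexOrder

namespace HoloMIMO

variable {Ω : Type*} [MeasurableSpace Ω]

/-- Spectral (ℓ²→ℓ²) operator norm of a complex rectangular matrix. -/
def specNorm {m n : ℕ} (A : Matrix (Fin m) (Fin n) ℂ) : ℝ :=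
  ‖LinearMap.toContinuousLinearMap (Matrix.toEuclideanLin A)‖

/-- Squared Euclidean norm of a complex vector. -/
def vecNormSq {n : ℕ} (a : Fin n → ℂ) : ℝ := ∑ i, Complex.normSq (a i)

/-- The sesquilinear form `aᴴ B b`. -/
def bilin {n : ℕ} (B : Matrix (Fin n) (Fin n) ℂ) (a b : Fin n → ℂ) : ℂ :=
  dotProduct (star a) (B.mulVec b)

/-- The quadratic form `aᴴ B a`. -/
def quad {n : ℕ} (B : Matrix (Fin n) (Fin n) ℂ) (a : Fin n → ℂ) : ℂ := bilin B a a

/-- The `k`-th column of a matrix, as a vector. -/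
def colv {m : ℕ} {n : Type*} (A : Matrix (Fin m) n ℂ) (k : n) : Fin m → ℂ := fun i => A i k

/-- Entrywise square root of a real matrix, viewed as a complex matrix. -/
def entrySqrt {m n : ℕ} (S : Matrix (Fin m) (Fin n) ℝ) : Matrix (Fin m) (Fin n) ℂ :=
  Matrix.of fun i j => (Real.sqrt (S i j) : ℂ)

/-- The channel `H = A + Σ^{∘1/2} ⊙ X`. -/
def chan {N M : ℕ} (A : Matrix (Fin N) (Fin M) ℂ) (S : Matrix (Fin N) (Fin M) ℝ)
    (X : Matrix (Fin N) (Fin M) ℂ) : Matrix (Fin N) (Fin M) ℂ :=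
  A + Matrix.hadamard (entrySqrt S) X

/-- `D_j` : the N×N diagonal matrix with the `j`-th column of `Σ` on the diagonal. -/
def Dcol {N M : ℕ} (S : Matrix (Fin N) (Fin M) ℝ) (j : Fin M) : Matrix (Fin N) (Fin N) ℂ :=
  Matrix.diagonal fun i => (S i j : ℂ)

/-- `D̃_i` : the M×M diagonal matrix with the `i`-th row of `Σ` on the diagonal. -/
def Drow {N M : ℕ} (S : Matrix (Fin N) (Fin M) ℝ) (i : Fin N) : Matrix (Fin M) (Fin M) ℂ :=
  Matrix.diagonal fun j => (S i j : ℂ)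

/-- The resolvent `Q = (ρ I_N + H Hᴴ)⁻¹`. -/
def Qmat {N : ℕ} {m : Type*} [Fintype m] (ρ : ℝ) (H : Matrix (Fin N) m ℂ) :
    Matrix (Fin N) (Fin N) ℂ :=
  ((ρ : ℂ) • (1 : Matrix (Fin N) (Fin N) ℂ) + H * Hᴴ)⁻¹

/-- The co-resolvent `Q̃ = (ρ I_M + Hᴴ H)⁻¹`. -/
def Qtmat {N M : ℕ} (ρ : ℝ) (H : Matrix (Fin N) (Fin M) ℂ) : Matrix (Fin M) (Fin M) ℂ :=
  ((ρ : ℂ) • (1 : Matrix (Fin M) (Fin M) ℂ) + Hᴴ * H)⁻¹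

/-- `H` with its `j`-th column deleted (columns indexed by the remaining column indices). -/
def delCol {N M : ℕ} (H : Matrix (Fin N) (Fin M) ℂ) (j : Fin M) :
    Matrix (Fin N) {k : Fin M // k ≠ j} ℂ :=
  Matrix.of fun i k => H i k.1

/-- The rank-one-perturbed resolvent `Q_j = (ρ I_N + H_j H_jᴴ)⁻¹`. -/
def Qjmat {N M : ℕ} (ρ : ℝ) (H : Matrix (Fin N) (Fin M) ℂ) (j : Fin M) :
    Matrix (Fin N) (Fin N) ℂ :=
  Qmat ρ (delCol H j)

/-- Mutual information `C(ρ) = log det(I + ρ⁻¹ H Hᴴ)`. -/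
def MI {N M : ℕ} (ρ : ℝ) (H : Matrix (Fin N) (Fin M) ℂ) : ℝ :=
  Real.log ‖(1 + (ρ : ℂ)⁻¹ • (H * Hᴴ)).det‖

/-- `ψ = diag((ρ(1+δ̃_i))⁻¹)`. -/
def psiMat {N : ℕ} (ρ : ℝ) (δt : Fin N → ℝ) : Matrix (Fin N) (Fin N) ℂ :=
  Matrix.diagonal fun i => (((ρ * (1 + δt i))⁻¹ : ℝ) : ℂ)

/-- `ψ̃ = diag((ρ(1+δ_j))⁻¹)`. -/
def psitMat {M : ℕ} (ρ : ℝ) (δ : Fin M → ℝ) : Matrix (Fin M) (Fin M) ℂ :=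
  Matrix.diagonal fun j => (((ρ * (1 + δ j))⁻¹ : ℝ) : ℂ)

/-- `T = (ψ⁻¹ + ρ A ψ̃ Aᴴ)⁻¹`. -/
def Tmat {N M : ℕ} (ρ : ℝ) (A : Matrix (Fin N) (Fin M) ℂ) (δ : Fin M → ℝ) (δt : Fin N → ℝ) :
    Matrix (Fin N) (Fin N) ℂ :=
  ((psiMat ρ δt)⁻¹ + (ρ : ℂ) • (A * psitMat ρ δ * Aᴴ))⁻¹

/-- `T̃ = (ψ̃⁻¹ + ρ Aᴴ ψ A)⁻¹`. -/
def Ttmat {N M : ℕ} (ρ : ℝ) (A : Matrix (Fin N) (Fin M) ℂ) (δ : Fin M → ℝ) (δt : Fin N → ℝ) :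
    Matrix (Fin M) (Fin M) ℂ :=
  ((psitMat ρ δ)⁻¹ + (ρ : ℂ) • (Aᴴ * psiMat ρ δt * A))⁻¹

/-- `(δ, δ̃)` is a (the) nonnegative solution of the canonical system of `M + N` equations
`δ_j = (1/M) Tr(D_j T)`, `δ̃_i = (1/M) Tr(D̃_i T̃)`. -/
def DESolution {N M : ℕ} (ρ : ℝ) (A : Matrix (Fin N) (Fin M) ℂ) (S : Matrix (Fin N) (Fin M) ℝ)
    (δ : Fin M → ℝ) (δt : Fin N → ℝ) : Prop :=
  (∀ j, 0 ≤ δ j) ∧ (∀ i, 0 ≤ δt i) ∧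
  (∀ j, (δ j : ℂ) = (M : ℂ)⁻¹ * (Dcol S j * Tmat ρ A δ δt).trace) ∧
  (∀ i, (δt i : ℂ) = (M : ℂ)⁻¹ * (Drow S i * Ttmat ρ A δ δt).trace)

/-- `t̃_{jj}`, the `j`-th diagonal entry of `T̃` (a real number). -/
def ttdiag {N M : ℕ} (ρ : ℝ) (A : Matrix (Fin N) (Fin M) ℂ) (δ : Fin M → ℝ) (δt : Fin N → ℝ)
    (j : Fin M) : ℝ := (Ttmat ρ A δ δt j j).re

/-- `Π_{jk} = a_kᴴ T D_j T a_k / (M (1+δ_k)²)`. -/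
def PiMat {N M : ℕ} (ρ : ℝ) (A : Matrix (Fin N) (Fin M) ℂ) (S : Matrix (Fin N) (Fin M) ℝ)
    (δ : Fin M → ℝ) (δt : Fin N → ℝ) : Matrix (Fin M) (Fin M) ℝ :=
  Matrix.of fun j k =>
    (bilin (Tmat ρ A δ δt * Dcol S j * Tmat ρ A δ δt) (colv A k) (colv A k)).re /
      (M * (1 + δ k) ^ 2)

/-- `Ξ_{jk} = (a_kᴴ T a_j)(a_jᴴ T a_k)/((1+δ_j)²(1+δ_k)²)` for `j ≠ k`, and `Ξ_{jj} = 0`. -/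
def XiMat {N M : ℕ} (ρ : ℝ) (A : Matrix (Fin N) (Fin M) ℂ) (δ : Fin M → ℝ) (δt : Fin N → ℝ) :
    Matrix (Fin M) (Fin M) ℝ :=
  Matrix.of fun j k =>
    if j = k then 0 else
      ((bilin (Tmat ρ A δ δt) (colv A k) (colv A j)) *
        (bilin (Tmat ρ A δ δt) (colv A j) (colv A k))).re /
        ((1 + δ j) ^ 2 * (1 + δ k) ^ 2)

/-- `Γ_{jk} = Tr(D_j T D_k T)/M²`. -/
def GammaMat {N M : ℕ} (ρ : ℝ) (A : Matrix (Fin N) (Fin M) ℂ) (S : Matrix (Fin N) (Fin M) ℝ)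
    (δ : Fin M → ℝ) (δt : Fin N → ℝ) : Matrix (Fin M) (Fin M) ℝ :=
  Matrix.of fun j k =>
    ((Dcol S j * Tmat ρ A δ δt * Dcol S k * Tmat ρ A δ δt).trace).re / (M : ℝ) ^ 2

/-- `Λ̃ = ρ² diag(t̃_{11}², …, t̃_{MM}²)`. -/
def LambdaMat {N M : ℕ} (ρ : ℝ) (A : Matrix (Fin N) (Fin M) ℂ) (δ : Fin M → ℝ)
    (δt : Fin N → ℝ) : Matrix (Fin M) (Fin M) ℝ :=
  Matrix.diagonal fun j => ρ ^ 2 * (ttdiag ρ A δ δt j) ^ 2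

/-- The 2M×2M block matrix `B_M = [[Π, Γ], [Ξ + Λ̃, Πᵀ]]`. -/
def BMat {N M : ℕ} (ρ : ℝ) (A : Matrix (Fin N) (Fin M) ℂ) (S : Matrix (Fin N) (Fin M) ℝ)
    (δ : Fin M → ℝ) (δt : Fin N → ℝ) : Matrix (Fin M ⊕ Fin M) (Fin M ⊕ Fin M) ℝ :=
  Matrix.fromBlocks (PiMat ρ A S δ δt) (GammaMat ρ A S δ δt)
    (XiMat ρ A δ δt + LambdaMat ρ A δ δt) (PiMat ρ A S δ δt)ᵀ

/-- `V_M(ρ) = − log det(I_{2M} − B_M)`. -/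
def VM {N M : ℕ} (ρ : ℝ) (A : Matrix (Fin N) (Fin M) ℂ) (S : Matrix (Fin N) (Fin M) ℝ)
    (δ : Fin M → ℝ) (δt : Fin N → ℝ) : ℝ :=
  - Real.log ((1 - BMat ρ A S δ δt).det)

/-- The entries of `X` are independent circularly-symmetric complex Gaussians: real and
imaginary parts of all entries are jointly independent, each centered Gaussian with
variance `v`. -/
def IIDcgauss {N M : ℕ} (μ : Measure Ω) (X : Ω → Matrix (Fin N) (Fin M) ℂ) (v : ℝ≥0) : Prop :=
  (∀ i j, Measure.map (fun ω => (X ω i j).re) μ = gaussianReal 0 v ∧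
      Measure.map (fun ω => (X ω i j).im) μ = gaussianReal 0 v) ∧
  iIndepFun
    (fun (p : (Fin N × Fin M) × Bool) ω =>
      if p.2 then (X ω p.1.1 p.1.2).re else (X ω p.1.1 p.1.2).im) μ

/-- The entries of the vector `x` are independent circularly-symmetric complex Gaussians,
the real and imaginary part of each entry being centered Gaussian of variance `v`. -/
def IIDcgaussVec {N : ℕ} (μ : Measure Ω) (x : Ω → Fin N → ℂ) (v : ℝ≥0) : Prop :=
  (∀ i, Measure.map (fun ω => (x ω i).re) μ = gaussianReal 0 v ∧
      Measure.map (fun ω => (x ω i).im) μ = gaussianReal 0 v) ∧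
  iIndepFun
    (fun (p : Fin N × Bool) ω => if p.2 then (x ω p.1).re else (x ω p.1).im) μ

/-- `F_j` : the σ-field generated by the columns of `X` of index `≥ j`. -/
def colSigma {N M : ℕ} (X : Ω → Matrix (Fin N) (Fin M) ℂ) (j : ℕ) : MeasurableSpace Ω :=
  MeasurableSpace.comap
    (fun ω => fun p : {k : Fin M // j ≤ (k : ℕ)} × Fin N => X ω p.2 p.1.1) inferInstance

/-- The random variable `ζ_j`. -/
def zeta {N M : ℕ} (ρ : ℝ) (A : Matrix (Fin N) (Fin M) ℂ) (S : Matrix (Fin N) (Fin M) ℝ)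
    (H : Matrix (Fin N) (Fin M) ℂ) (j : Fin M) : ℝ :=
  ((quad (Qjmat ρ H j) (colv H j)).re - (M : ℝ)⁻¹ * ((Dcol S j * Qjmat ρ H j).trace).re -
      (quad (Qjmat ρ H j) (colv A j)).re) /
    (1 + (M : ℝ)⁻¹ * ((Dcol S j * Qjmat ρ H j).trace).re + (quad (Qjmat ρ H j) (colv A j)).re)

/-- The random variable `e_j = h_jᴴ Q_j h_j − a_jᴴ Q_j a_j − (1/M) Tr(D_j Q_j)`. -/
def eQ {N M : ℕ} (ρ : ℝ) (A : Matrix (Fin N) (Fin M) ℂ) (S : Matrix (Fin N) (Fin M) ℝ)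
    (H : Matrix (Fin N) (Fin M) ℂ) (j : Fin M) : ℝ :=
  (quad (Qjmat ρ H j) (colv H j)).re - (quad (Qjmat ρ H j) (colv A j)).re -
    (M : ℝ)⁻¹ * ((Dcol S j * Qjmat ρ H j).trace).re

/-- Entrywise conditional expectation of a random matrix. -/
def condexpMat {N : ℕ} (μ : Measure Ω) (m : MeasurableSpace Ω)
    (F : Ω → Matrix (Fin N) (Fin N) ℂ) : Ω → Matrix (Fin N) (Fin N) ℂ :=
  fun ω => Matrix.of fun i i' => (μ[(fun ω' => F ω' i i') | m]) ω

/-- A sequence (indexed by the number `M` of transmit antennas) of non-centered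
non-separable Gaussian MIMO models satisfying assumptions (A.1)–(A.3). -/
structure SeqModel (Ω : Type*) [MeasurableSpace Ω] (μ : Measure Ω) where
  /-- `ρ > 0` is the fixed noise level (inverse SNR). -/
  ρ : ℝ
  hρ : 0 < ρ
  /-- number of receive antennas as a function of `M` -/
  N : ℕ → ℕ
  hN : Tendsto N atTop atTop
  /-- LoS components -/
  A : ∀ M : ℕ, Matrix (Fin (N M)) (Fin M) ℂ
  /-- variance profiles -/
  S : ∀ M : ℕ, Matrix (Fin (N M)) (Fin M) ℝ
  /-- random matrices -/
  X : ∀ M : ℕ, Ω → Matrix (Fin (N M)) (Fin M) ℂ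
  measX : ∀ M i j, Measurable fun ω => X M ω i j
  gaussX : ∀ M : ℕ, 1 ≤ M → IIDcgauss μ (X M) (M : ℝ≥0)⁻¹
  /-- (A.1) -/
  c₁ : ℝ
  c₂ : ℝ
  hc₁ : 0 < c₁
  hA1 : ∀ᶠ M : ℕ in atTop, c₁ ≤ (M : ℝ) / (N M : ℝ) ∧ (M : ℝ) / (N M : ℝ) ≤ c₂
  /-- (A.2) -/
  σmin : ℝ
  σmax : ℝ
  hσmin : 0 < σmin
  hA2 : ∀ M i j, σmin ≤ S M i j ∧ S M i j ≤ σmax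
  /-- (A.3) -/
  amax : ℝ
  hA3 : ∀ M, specNorm (A M) ≤ amax

variable {μ : Measure Ω}

/-- The random channel of the `M`-th model. -/
def SeqModel.H (m : SeqModel Ω μ) (M : ℕ) (ω : Ω) : Matrix (Fin (m.N M)) (Fin M) ℂ :=
  chan (m.A M) (m.S M) (m.X M ω)

/-- The mutual information of the `M`-th model. -/
def SeqModel.C (m : SeqModel Ω μ) (M : ℕ) (ω : Ω) : ℝ := MI m.ρ (m.H M ω)

/-- The martingale increment `γ_j = E_j[log(1+ζ_j)] − E_{j+1}[log(1+ζ_j)]`. -/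
def SeqModel.gamma (m : SeqModel Ω μ) (M : ℕ) (j : Fin M) : Ω → ℝ := fun ω =>
  ((μ[(fun ω' => Real.log (1 + zeta m.ρ (m.A M) (m.S M) (m.H M ω') j)) |
      colSigma (m.X M) (j : ℕ)]) ω) -
  ((μ[(fun ω' => Real.log (1 + zeta m.ρ (m.A M) (m.S M) (m.H M ω') j)) |
      colSigma (m.X M) ((j : ℕ) + 1)]) ω)

section ResolventIdentities

variable {K : Type*} [Field K] {m n : Type*} [Fintype m] [Fintype n] [DecidableEq m]
  [DecidableEq n]

theorem smul_inv_smul_one_add_mul (c : K) (A : Matrix m n K) (B : Matrix n m K)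
    (hBA : IsUnit (c • 1 + B * A).det) (hAB : IsUnit (c • 1 + A * B).det) :
    c • (c • 1 + B * A)⁻¹ = 1 - B * (c • 1 + A * B)⁻¹ * A := by
  have hcomm : B * (c • 1 + A * B) = (c • 1 + B * A) * B := by
    simp only [Matrix.mul_add, Matrix.add_mul, Matrix.mul_smul, Matrix.smul_mul,
      Matrix.mul_one, Matrix.one_mul, Matrix.mul_assoc]
  have hpush : (c • 1 + B * A)⁻¹ * B = B * (c • 1 + A * B)⁻¹ := by
    calc (c • 1 + B * A)⁻¹ * B
        = (c • 1 + B * A)⁻¹ * (B * (c • 1 + A * B)) * (c • 1 + A * B)⁻¹ := by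
          rw [Matrix.mul_assoc, Matrix.mul_assoc, Matrix.mul_nonsing_inv _ hAB, Matrix.mul_one]
      _ = B * (c • 1 + A * B)⁻¹ := by
          rw [hcomm, ← Matrix.mul_assoc, Matrix.nonsing_inv_mul _ hBA, Matrix.one_mul]
  calc c • (c • 1 + B * A)⁻¹ = (c • 1 + B * A)⁻¹ * (c • 1 + B * A - B * A) := by
        rw [add_sub_cancel_right, Matrix.mul_smul, Matrix.mul_one]
    _ = 1 - B * (c • 1 + A * B)⁻¹ * A := by
        rw [Matrix.mul_sub, Matrix.nonsing_inv_mul _ hBA, ← Matrix.mul_assoc, hpush]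

theorem one_add_dotProduct_smul_inv_add_vecMulVec_mulVec {B : Matrix m m K} (u v : m → K)
    (hB : IsUnit B.det) (hBuv : IsUnit (B + vecMulVec u v).det) :
    (1 + v ⬝ᵥ B⁻¹ *ᵥ u) • ((B + vecMulVec u v)⁻¹ *ᵥ u) = B⁻¹ *ᵥ u := by
  have h : (B + vecMulVec u v) *ᵥ (B⁻¹ *ᵥ u) = (1 + v ⬝ᵥ B⁻¹ *ᵥ u) • u := by
    rw [Matrix.add_mulVec, Matrix.mulVec_mulVec, Matrix.mul_nonsing_inv _ hB, Matrix.one_mulVec,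
      vecMulVec_mulVec, op_smul_eq_smul, add_smul, one_smul]
  rw [← Matrix.mulVec_smul, ← h, Matrix.mulVec_mulVec, Matrix.nonsing_inv_mul _ hBuv,
    Matrix.one_mulVec]

theorem one_sub_dotProduct_inv_add_vecMulVec_mulVec {B : Matrix m m K} (u v : m → K)
    (hB : IsUnit B.det) (hBuv : IsUnit (B + vecMulVec u v).det) :
    1 - v ⬝ᵥ (B + vecMulVec u v)⁻¹ *ᵥ u = (1 + v ⬝ᵥ B⁻¹ *ᵥ u)⁻¹ := by
  set q := v ⬝ᵥ B⁻¹ *ᵥ u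
  have h := one_add_dotProduct_smul_inv_add_vecMulVec_mulVec u v hB hBuv
  -- If `1 + q = 0`, then `B⁻¹ u = 0` and hence `q = 0`.
  have hq : 1 + q ≠ 0 := by
    intro h0
    rw [h0, zero_smul] at h
    have : q = 0 := by simp [q, ← h]
    simp [this] at h0
  have key : (1 + q) * (v ⬝ᵥ (B + vecMulVec u v)⁻¹ *ᵥ u) = q := by
    rw [← smul_eq_mul, ← dotProduct_smul, h]
  field_simp
  linear_combination -key

end ResolventIdentities

theorem posDef_ofReal_smul_one_add_mul_conjTranspose {m n : Type*} [Fintype m] [Fintype n]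
    [DecidableEq m] {ρ : ℝ} (hρ : 0 < ρ) (A : Matrix m n ℂ) :
    ((ρ : ℂ) • 1 + A * Aᴴ).PosDef :=
  (PosDef.one.smul (Complex.zero_lt_real.mpr hρ)).add_posSemidef
    (posSemidef_self_mul_conjTranspose A)

theorem conjTranspose_mul_mul_apply_self {m n : Type*} [Fintype m] (A : Matrix m n ℂ)
    (Q : Matrix m m ℂ) (j : n) :
    (Aᴴ * Q * A) j j = star (fun i => A i j) ⬝ᵥ Q *ᵥ fun i => A i j := by
  simp only [Matrix.mul_apply, conjTranspose_apply, dotProduct, mulVec, Pi.star_apply,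
    Finset.sum_mul, Finset.mul_sum, mul_assoc]
  exact Finset.sum_comm

theorem mul_conjTranspose_eq_delCol_add_vecMulVec {N M : ℕ} (H : Matrix (Fin N) (Fin M) ℂ)
    (j : Fin M) :
    H * Hᴴ = delCol H j * (delCol H j)ᴴ + vecMulVec (colv H j) (star (colv H j)) := by
  ext i i'
  simp only [Matrix.mul_apply, conjTranspose_apply, RCLike.star_def,
    Fintype.sum_eq_add_sum_subtype_ne _ j, delCol, vecMulVec, colv, Pi.star_apply,
    Matrix.add_apply, of_apply]
  ring

section Statements

variable [IsProbabilityMeasure μ]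

/-- diagonal entries of the co-resolvent. -/
theorem stmt8_coresolvent_diagonal_entry
    {N M : ℕ} (ρ : ℝ) (hρ : 0 < ρ) (H : Matrix (Fin N) (Fin M) ℂ) (j : Fin M) :
    Qtmat ρ H j j = ((ρ : ℂ) * (1 + quad (Qjmat ρ H j) (colv H j)))⁻¹ := by
  have hρ0 : (ρ : ℂ) ≠ 0 := Complex.ofReal_ne_zero.mpr hρ.ne'
  have isUnit_det {m n : Type} [Fintype m] [Fintype n] [DecidableEq m] (A : Matrix m n ℂ) :
      IsUnit ((ρ : ℂ) • 1 + A * Aᴴ).det :=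
    (isUnit_iff_isUnit_det _).mp (posDef_ofReal_smul_one_add_mul_conjTranspose hρ A).isUnit
  have hsplit := mul_conjTranspose_eq_delCol_add_vecMulVec H j
  calc Qtmat ρ H j j = (ρ : ℂ)⁻¹ * ((ρ : ℂ) • Qtmat ρ H) j j := by
        rw [Matrix.smul_apply, smul_eq_mul, inv_mul_cancel_left₀ hρ0]
    _ = (ρ : ℂ)⁻¹ * (1 - star (colv H j) ⬝ᵥ ((ρ : ℂ) • 1 + H * Hᴴ)⁻¹ *ᵥ colv H j) := by
        rw [Qtmat, smul_inv_smul_one_add_mul _ H Hᴴ (by simpa using isUnit_det Hᴴ) (isUnit_det H),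
          Matrix.sub_apply, one_apply_eq, conjTranspose_mul_mul_apply_self]
        rfl
    _ = _ := by
        have hQ := isUnit_det H
        rw [hsplit, ← add_assoc] at hQ
        rw [hsplit, ← add_assoc,
          one_sub_dotProduct_inv_add_vecMulVec_mulVec _ _ (isUnit_det (delCol H j)) hQ, mul_inv]
        rfl

end Statements

end HoloMIMO
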